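/- Let (Ω, P) be a probability space, Λ > 0, N : Ω → ℕ a Poisson random variable with mean Λ, and (T_i)_{i∈ℕ} a sequence of real-valued random variables, each with common law μ (a Borel probability measure on ℝ), such that the family (N, T_0, T_1, …) is mutually independent. Fix t ∈ ℝ and define N_past(ω) = #{ i < N(ω) : T_i(ω) < t } and N_future(ω) = #{ i < N(ω) : T_i(ω) ≥ t }. Then N_past and N_future are independent random variables, N_past is Poisson with mean Λ·μ((−∞,t)), and N_future is Poisson with mean Λ·μ([t,∞)). -/

import Mathlib

open MeasureTheory ProbabilityTheory
open scoped Classical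

open Finset
open scoped NNReal ENNReal Nat

/-! Given `N = a + b`, the marks of the `a + b` points land in `B` independently with probability
`p = μ B`, so `P(N_B = a, N_Bᶜ = b) = C(a+b, a) e^{-Λ} Λ^{a+b} / (a+b)! · p^a q^b` with
`q = 1 - p`.
Since `e^{-Λ} = e^{-Λp} e^{-Λq}`, this factors as `Po(Λp){a} · Po(Λq){b}`: the joint law of the
two counts is the product `Po(Λp) ⊗ Po(Λq)`, which gives both the marginals and independence. -/

theorem indepFun_and_map_eq_of_map_prodMk_eq_prod {Ω α β : Type*} [MeasurableSpace Ω]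
    [MeasurableSpace α] [MeasurableSpace β] {P : Measure Ω} [IsFiniteMeasure P]
    {X : Ω → α} {Y : Ω → β} {μ : Measure α} {ν : Measure β}
    [IsProbabilityMeasure μ] [IsProbabilityMeasure ν]
    (hX : Measurable X) (hY : Measurable Y) (h : P.map (fun ω => (X ω, Y ω)) = μ.prod ν) :
    IndepFun X Y P ∧ P.map X = μ ∧ P.map Y = ν := by
  have hXlaw : P.map X = μ := calc
    P.map X = (P.map fun ω => (X ω, Y ω)).map Prod.fst :=
      (Measure.map_map measurable_fst (hX.prodMk hY)).symm
    _ = μ := by simp [h]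
  have hYlaw : P.map Y = ν := calc
    P.map Y = (P.map fun ω => (X ω, Y ω)).map Prod.snd :=
      (Measure.map_map measurable_snd (hX.prodMk hY)).symm
    _ = ν := by simp [h]
  refine ⟨?_, hXlaw, hYlaw⟩
  rw [indepFun_iff_map_prod_eq_prod_map_map hX.aemeasurable hY.aemeasurable, h, hXlaw, hYlaw]

theorem poissonMeasure_singleton_of_coe_eq {r : ℝ≥0} {m : ℝ} (hr : (r : ℝ) = m) (n : ℕ) :
    poissonMeasure r {n} = ENNReal.ofReal (m ^ n * Real.exp (-m) / n !) := by
  rw [poissonMeasure_singleton, hr, mul_comm (Real.exp _)]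

theorem choose_mul_poissonMeasure_mul_pow (r : ℝ≥0) {p q : ℝ≥0} (hpq : p + q = 1) (a b : ℕ) :
    ((a + b).choose a : ℝ≥0∞) * poissonMeasure r {a + b} * (p : ℝ≥0∞) ^ a * (q : ℝ≥0∞) ^ b
      = poissonMeasure (r * p) {a} * poissonMeasure (r * q) {b} := by
  simp only [poissonMeasure_singleton, ← ENNReal.ofReal_coe_nnreal, ← ENNReal.ofReal_natCast,
    ← ENNReal.ofReal_pow NNReal.zero_le_coe]
  rw [← ENNReal.ofReal_mul (by positivity), ← ENNReal.ofReal_mul (by positivity),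
    ← ENNReal.ofReal_mul (by positivity), ← ENNReal.ofReal_mul (by positivity)]
  congr 1
  have hexp : Real.exp (-r) = Real.exp (-(r * p : ℝ≥0)) * Real.exp (-(r * q : ℝ≥0)) := by
    rw [← Real.exp_add, ← neg_add, ← NNReal.coe_add, ← mul_add, hpq, mul_one]
  have hfact : ((a + b).choose a : ℝ) * a ! * b ! = (a + b)! := by
    exact_mod_cast by simpa using Nat.choose_mul_factorial_mul_factorial (Nat.le_add_right a b)
  have hchoose : ((a + b).choose a : ℝ) ≠ 0 := by
    exact_mod_cast (Nat.choose_pos (Nat.le_add_right a b)).ne'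
  rw [hexp, ← hfact]
  push_cast
  field_simp
  ring

section PointsWithCount

variable {Ω : Type*} {N : Ω → ℕ} {T : ℕ → Ω → ℝ} {B : Set ℝ}

def countWithPoints (N : Ω → ℕ) (T : ℕ → Ω → ℝ) (o : Option ℕ) : Ω → ℝ :=
  o.elim (fun ω => N ω) T

noncomputable def countIn (N : Ω → ℕ) (T : ℕ → Ω → ℝ) (B : Set ℝ) (ω : Ω) : ℕ :=
  #{i ∈ range (N ω) | T i ω ∈ B}

theorem countIn_add_countIn_compl (ω : Ω) : countIn N T B ω + countIn N T Bᶜ ω = N ω := by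
  simpa [countIn] using card_filter_add_card_filter_not (s := range (N ω)) (fun i => T i ω ∈ B)

variable [MeasurableSpace Ω] {P : Measure Ω}

theorem measurable_countIn (hN : Measurable N) (hT : ∀ i, Measurable (T i))
    (hB : MeasurableSet B) : Measurable (countIn N T B) := by
  have hcount : Measurable fun p : Ω × ℕ => #{i ∈ range p.2 | T i p.1 ∈ B} :=
    measurable_from_prod_countable_left fun n => by
      simp only [card_filter]
      exact Finset.measurable_sum _ fun i _ =>
        Measurable.ite (hT i hB) measurable_const measurable_const
  exact hcount.comp (measurable_id.prodMk hN)

theorem measure_eq_inter_biInter_preimage (hindep : iIndepFun (countWithPoints N T) P) (n : ℕ)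
    (s : Finset ℕ) {C : ℕ → Set ℝ} (hC : ∀ i, MeasurableSet (C i)) :
    P ({ω | N ω = n} ∩ ⋂ i ∈ s, T i ⁻¹' C i) = P {ω | N ω = n} * ∏ i ∈ s, P (T i ⁻¹' C i) := by
  let sets : Option ℕ → Set ℝ := fun o => o.elim {(n : ℝ)} C
  have hNset : countWithPoints N T none ⁻¹' sets none = {ω | N ω = n} := by
    ext; simp [countWithPoints, sets]
  calc P ({ω | N ω = n} ∩ ⋂ i ∈ s, T i ⁻¹' C i)
      = P (⋂ o ∈ insertNone s, countWithPoints N T o ⁻¹' sets o) := by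
        congr 1; ext ω; simp [Option.forall, countWithPoints, sets]
    _ = ∏ o ∈ insertNone s, P (countWithPoints N T o ⁻¹' sets o) :=
        hindep.measure_inter_preimage_eq_mul _ (by rintro (_ | i) _ <;> simp [sets, hC])
    _ = P {ω | N ω = n} * ∏ i ∈ s, P (T i ⁻¹' C i) := by
        rw [prod_insertNone, hNset]; rfl

omit [MeasurableSpace Ω] in
theorem setOf_eq_and_filter_eq {n : ℕ} {S : Finset ℕ} (hS : S ⊆ range n) :
    {ω | N ω = n ∧ {i ∈ range n | T i ω ∈ B} = S}
      = {ω | N ω = n} ∩ ⋂ i ∈ range n, T i ⁻¹' (if i ∈ S then B else Bᶜ) := by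
  ext ω
  simp only [Set.mem_ofPred_eq, Set.mem_inter_iff, Set.mem_iInter, Set.mem_preimage,
    Finset.ext_iff, mem_filter]
  refine and_congr_right fun _ => ⟨fun h i hi => ?_, fun h i => ?_⟩
  · split_ifs <;> grind
  · by_cases hi : i ∈ range n
    · have := h i hi
      split_ifs at this <;> grind
    · grind

theorem measure_eq_and_filter_eq (hindep : iIndepFun (countWithPoints N T) P)
    (hT : ∀ i, Measurable (T i)) {μ : Measure ℝ} (hlaw : ∀ i, P.map (T i) = μ)
    (hB : MeasurableSet B) {n : ℕ} {S : Finset ℕ} (hS : S ⊆ range n) :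
    P {ω | N ω = n ∧ {i ∈ range n | T i ω ∈ B} = S}
      = P {ω | N ω = n} * μ B ^ #S * μ Bᶜ ^ (n - #S) := by
  have hmark : ∀ i, P (T i ⁻¹' (if i ∈ S then B else Bᶜ)) = if i ∈ S then μ B else μ Bᶜ := by
    intro i
    split_ifs
    · rw [← hlaw i, Measure.map_apply (hT i) hB]
    · rw [← hlaw i, Measure.map_apply (hT i) hB.compl]
  have hcompl : #{i ∈ range n | i ∉ S} = n - #S := by
    rw [filter_not, filter_mem_eq_inter, inter_eq_right.2 hS, card_sdiff_of_subset hS, card_range]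
  rw [setOf_eq_and_filter_eq hS,
    measure_eq_inter_biInter_preimage hindep n _ fun i => by split_ifs; exacts [hB, hB.compl],
    prod_congr rfl fun i _ => hmark i, prod_ite, prod_const, prod_const, filter_mem_eq_inter,
    inter_eq_right.2 hS, hcompl, mul_assoc]

theorem measure_eq_and_countIn_eq (hN : Measurable N) (hindep : iIndepFun (countWithPoints N T) P)
    (hT : ∀ i, Measurable (T i)) {μ : Measure ℝ} (hlaw : ∀ i, P.map (T i) = μ)
    (hB : MeasurableSet B) (n a : ℕ) :
    P {ω | N ω = n ∧ countIn N T B ω = a}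
      = n.choose a * P {ω | N ω = n} * μ B ^ a * μ Bᶜ ^ (n - a) := by
  have hset : {ω | N ω = n ∧ countIn N T B ω = a}
      = ⋃ S ∈ powersetCard a (range n), {ω | N ω = n ∧ {i ∈ range n | T i ω ∈ B} = S} := by
    ext ω
    simp only [countIn, Set.mem_ofPred_eq, Set.mem_iUnion, mem_powersetCard, exists_prop]
    constructor
    · rintro ⟨rfl, rfl⟩
      exact ⟨_, ⟨filter_subset _ _, rfl⟩, rfl, rfl⟩
    · rintro ⟨S, ⟨-, rfl⟩, rfl, rfl⟩
      exact ⟨rfl, rfl⟩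
  have hdisj : (powersetCard a (range n) : Set (Finset ℕ)).PairwiseDisjoint
      fun S => {ω | N ω = n ∧ {i ∈ range n | T i ω ∈ B} = S} :=
    fun S _ S' _ hne => Set.disjoint_left.2 fun ω h h' => hne (h.2.symm.trans h'.2)
  have hmeas : ∀ S ∈ powersetCard a (range n),
      MeasurableSet {ω | N ω = n ∧ {i ∈ range n | T i ω ∈ B} = S} := by
    intro S hS
    rw [setOf_eq_and_filter_eq (mem_powersetCard.1 hS).1]
    exact (hN (measurableSet_singleton n)).inter <| .biInter (range n).countable_toSet
      fun i _ => hT i (by split_ifs; exacts [hB, hB.compl])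
  rw [hset, measure_biUnion_finset hdisj hmeas, sum_congr rfl fun S hS => by
      rw [measure_eq_and_filter_eq hindep hT hlaw hB (mem_powersetCard.1 hS).1,
        (mem_powersetCard.1 hS).2],
    sum_const, card_powersetCard, card_range, nsmul_eq_mul]
  ring

theorem map_countIn_prodMk_countIn_compl (hN : Measurable N) {r : ℝ≥0}
    (hNlaw : ∀ n, P {ω | N ω = n} = poissonMeasure r {n})
    (hindep : iIndepFun (countWithPoints N T) P) (hT : ∀ i, Measurable (T i))
    {μ : Measure ℝ} [IsProbabilityMeasure μ] (hlaw : ∀ i, P.map (T i) = μ)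
    (hB : MeasurableSet B) :
    P.map (fun ω => (countIn N T B ω, countIn N T Bᶜ ω))
      = (poissonMeasure (r * (μ B).toNNReal)).prod (poissonMeasure (r * (μ Bᶜ).toNNReal)) := by
  have hpq : (μ B).toNNReal + (μ Bᶜ).toNNReal = 1 := by
    rw [← ENNReal.toNNReal_add (measure_ne_top _ _) (measure_ne_top _ _),
      prob_add_prob_compl hB, ENNReal.toNNReal_one]
  refine Measure.ext_of_singleton fun ⟨a, b⟩ => ?_
  have hpreimage : (fun ω => (countIn N T B ω, countIn N T Bᶜ ω)) ⁻¹' {(a, b)}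
      = {ω | N ω = a + b ∧ countIn N T B ω = a} := by
    ext ω
    have := countIn_add_countIn_compl (N := N) (T := T) (B := B) ω
    simp only [Set.mem_preimage, Set.mem_singleton_iff, Prod.ext_iff, Set.mem_ofPred_eq]
    omega
  rw [Measure.map_apply ((measurable_countIn hN hT hB).prodMk (measurable_countIn hN hT hB.compl))
      (measurableSet_singleton _), hpreimage, ← Set.singleton_prod_singleton, Measure.prod_prod,
    measure_eq_and_countIn_eq hN hindep hT hlaw hB, hNlaw, add_tsub_cancel_left,
    ← choose_mul_poissonMeasure_mul_pow r hpq, ENNReal.coe_toNNReal (measure_ne_top _ _),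
    ENNReal.coe_toNNReal (measure_ne_top _ _)]

theorem measure_eq_of_map_eq_poissonMeasure {X : Ω → ℕ} (hX : Measurable X) {r : ℝ≥0} {m : ℝ}
    (hr : (r : ℝ) = m) (hXlaw : P.map X = poissonMeasure r) (n : ℕ) :
    P {ω | X ω = n} = ENNReal.ofReal (m ^ n * Real.exp (-m) / n !) := by
  rw [← poissonMeasure_singleton_of_coe_eq hr, ← hXlaw,
    Measure.map_apply hX (measurableSet_singleton n)]
  rfl

end PointsWithCount

/-- Proposition 1 of the paper: if `N` is Poisson with mean `Λ` and the points
`T_0, …, T_{N-1}` are i.i.d. with law `μ`, all mutually independent, then the numbers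
of points falling before the fixed time `t` and at or after `t` are independent, and
each is Poisson with means `Λ μ((-∞,t))` and `Λ μ([t,∞))` respectively. -/
theorem poisson_past_future_split
    {Ω : Type*} [MeasurableSpace Ω] (P : Measure Ω) [IsProbabilityMeasure P]
    (Λ : ℝ) (hΛ : 0 < Λ)
    (N : Ω → ℕ) (hNmeas : Measurable N)
    (hN : ∀ r : ℕ, P {ω | N ω = r} = ENNReal.ofReal (Λ ^ r * Real.exp (-Λ) / r.factorial))
    (T : ℕ → Ω → ℝ) (hTmeas : ∀ i, Measurable (T i))
    (μ : Measure ℝ) [IsProbabilityMeasure μ]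
    (hlaw : ∀ i, P.map (T i) = μ)
    (hindep : iIndepFun (β := fun _ : Option ℕ => ℝ)
      (fun o : Option ℕ => match o with
        | none => fun ω => (N ω : ℝ)
        | some i => T i) P)
    (t : ℝ)
    (Npast Nfuture : Ω → ℕ)
    (hpast : ∀ ω, Npast ω = ((Finset.range (N ω)).filter (fun i => T i ω < t)).card)
    (hfuture : ∀ ω, Nfuture ω = ((Finset.range (N ω)).filter (fun i => t ≤ T i ω)).card) :
    IndepFun Npast Nfuture P ∧
    (∀ r : ℕ, P {ω | Npast ω = r}
      = ENNReal.ofReal ((Λ * (μ (Set.Iio t)).toReal) ^ r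
          * Real.exp (-(Λ * (μ (Set.Iio t)).toReal)) / r.factorial)) ∧
    (∀ r : ℕ, P {ω | Nfuture ω = r}
      = ENNReal.ofReal ((Λ * (μ (Set.Ici t)).toReal) ^ r
          * Real.exp (-(Λ * (μ (Set.Ici t)).toReal)) / r.factorial)) := by
  obtain rfl : Npast = countIn N T (Set.Iio t) := funext hpast
  obtain rfl : Nfuture = countIn N T (Set.Iio t)ᶜ := funext fun ω => by simp [hfuture, countIn]
  have hNlaw : ∀ n, P {ω | N ω = n} = poissonMeasure Λ.toNNReal {n} := fun n =>
    (hN n).trans (poissonMeasure_singleton_of_coe_eq (Real.coe_toNNReal _ hΛ.le) n).symm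
  have hfamily : iIndepFun (countWithPoints N T) P := by
    convert hindep using 1
    ext (_ | i) <;> rfl
  have hrate : ∀ B : Set ℝ, ((Λ.toNNReal * (μ B).toNNReal : ℝ≥0) : ℝ) = Λ * (μ B).toReal :=
    fun B => by rw [NNReal.coe_mul, Real.coe_toNNReal _ hΛ.le, ENNReal.coe_toNNReal_eq_toReal]
  have hpast_meas := measurable_countIn hNmeas hTmeas (measurableSet_Iio (a := t))
  have hfuture_meas := measurable_countIn hNmeas hTmeas (measurableSet_Iio (a := t)).compl
  obtain ⟨hindep', hpast_law, hfuture_law⟩ := indepFun_and_map_eq_of_map_prodMk_eq_prod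
    hpast_meas hfuture_meas
    (map_countIn_prodMk_countIn_compl hNmeas hNlaw hfamily hTmeas hlaw measurableSet_Iio)
  exact ⟨hindep', measure_eq_of_map_eq_poissonMeasure hpast_meas (hrate _) hpast_law,
    Set.compl_Iio (a := t) ▸
      measure_eq_of_map_eq_poissonMeasure hfuture_meas (hrate _) hfuture_law⟩
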